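/- Let Z be a non-empty antichain of A*. If ↑Z = XY for final segments X, Y of A*, then X = ↑Min(X) and Y = ↑Min(Y). -/
import Mathlib


/-- The Higman (subword) ordering on words over an ordered alphabet `A`. -/
def Hig {A : Type*} [PartialOrder A] (u v : List A) : Prop :=
  List.SublistForall₂ (· ≤ ·) u v

/-- Elementwise concatenation of languages. -/
def conc {A : Type*} (X Y : Set (List A)) : Set (List A) :=
  Set.image2 (· ++ ·) X Y

/-- A final segment (upward closed set) of `A*` for the Higman ordering. -/
def IsFinal {A : Type*} [PartialOrder A] (F : Set (List A)) : Prop :=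
  ∀ ⦃a b : List A⦄, Hig a b → a ∈ F → b ∈ F

/-- Upward closure of a set of words. -/
def upset {A : Type*} [PartialOrder A] (X : Set (List A)) : Set (List A) :=
  {b | ∃ a ∈ X, Hig a b}

/-- The set of minimal elements of a set of words. -/
def minSet {A : Type*} [PartialOrder A] (X : Set (List A)) : Set (List A) :=
  {x | x ∈ X ∧ ∀ y ∈ X, Hig y x → y = x}

/-- An antichain of words for the Higman ordering. -/
def IsAnti {A : Type*} [PartialOrder A] (U : Set (List A)) : Prop :=
  ∀ x ∈ U, ∀ y ∈ U, x ≠ y → ¬ Hig x y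


section HigAux
variable {A : Type*} [PartialOrder A]

lemma hig_refl (u : List A) : Hig u u :=
  List.sublistForall₂_iff.2 ⟨u, List.forall₂_refl u, List.Sublist.refl u⟩

lemma hig_trans {u v w : List A} (h1 : Hig u v) (h2 : Hig v w) : Hig u w := by
  unfold Hig at *; exact _root_.trans h1 h2

lemma hig_of_sublist {u v : List A} (h : u.Sublist v) : Hig u v :=
  List.sublistForall₂_iff.2 ⟨u, List.forall₂_refl u, h⟩

lemma hig_length {u v : List A} (h : Hig u v) : u.length ≤ v.length := by
  obtain ⟨w, hf, hs⟩ := List.sublistForall₂_iff.1 h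
  calc u.length = w.length := hf.length_eq
    _ ≤ v.length := hs.length_le

lemma hig_append {u1 u2 v1 v2 : List A} (h1 : Hig u1 v1) (h2 : Hig u2 v2) :
    Hig (u1 ++ u2) (v1 ++ v2) := by
  obtain ⟨w1, hf1, hs1⟩ := List.sublistForall₂_iff.1 h1
  obtain ⟨w2, hf2, hs2⟩ := List.sublistForall₂_iff.1 h2
  exact List.sublistForall₂_iff.2 ⟨w1 ++ w2, List.rel_append hf1 hf2, hs1.append hs2⟩

lemma hig_split {z x y : List A} (h : Hig z (x ++ y)) :
    ∃ p s, z = p ++ s ∧ Hig p x ∧ Hig s y := by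
  obtain ⟨w, hf, hs⟩ := List.sublistForall₂_iff.1 h
  obtain ⟨w1, w2, rfl, hs1, hs2⟩ := List.sublist_append_iff.1 hs
  refine ⟨z.take w1.length, z.drop w1.length, (List.take_append_drop _ z).symm, ?_, ?_⟩
  · exact List.sublistForall₂_iff.2 ⟨w1, List.forall₂_take_append z w1 w2 hf, hs1⟩
  · exact List.sublistForall₂_iff.2 ⟨w2, List.forall₂_drop_append z w1 w2 hf, hs2⟩

lemma hig_forall₂ {u v : List A} (h : Hig u v) (hl : v.length ≤ u.length) :
    List.Forall₂ (· ≤ ·) u v := by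
  obtain ⟨w, hf, hs⟩ := List.sublistForall₂_iff.1 h
  have hwv : w = v := hs.eq_of_length_le (by rw [← hf.length_eq]; exact hl)
  subst hwv; exact hf

lemma forall₂_antisymm : ∀ {u v : List A},
    List.Forall₂ (· ≤ ·) u v → List.Forall₂ (· ≤ ·) v u → u = v
  | [], [], _, _ => rfl
  | _ :: _, _ :: _, List.Forall₂.cons h1 t1, List.Forall₂.cons h2 t2 => by
      rw [le_antisymm h1 h2, forall₂_antisymm t1 t2]

end HigAux

theorem stmt10 {A : Type*} [PartialOrder A] (Z X Y : Set (List A))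
    (hZ : IsAnti Z) (hZne : Z.Nonempty)
    (hX : IsFinal X) (hY : IsFinal Y)
    (h : upset Z = conc X Y) :
    X = upset (minSet X) ∧ Y = upset (minSet Y) := by
  have mem_conc : ∀ {a b : List A}, a ∈ X → b ∈ Y → a ++ b ∈ upset Z := by
    intro a b ha hb; rw [h]; exact Set.mem_image2_of_mem ha hb
  have conc_mem : ∀ {w : List A}, w ∈ upset Z → ∃ a ∈ X, ∃ b ∈ Y, a ++ b = w := by
    intro w hw; rw [h] at hw; exact hw
  have self_mem : ∀ {z : List A}, z ∈ Z → z ∈ upset Z := fun hz => ⟨_, hz, hig_refl _⟩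
  -- both halves of any `X`-`Y` factorization of a word of `Z` are minimal
  have minmin : ∀ z ∈ Z, ∀ p s : List A, z = p ++ s → p ∈ X → s ∈ Y →
      p ∈ minSet X ∧ s ∈ minSet Y := by
    intro z hz p s hzps hp hs
    constructor
    · refine ⟨hp, fun u hu huh => ?_⟩
      obtain ⟨z', hz', hle'⟩ := mem_conc hu hs
      have hz'z : Hig z' z := hig_trans hle' (hzps ▸ hig_append huh (hig_refl s))
      have hzz : z' = z := by
        by_contra hne; exact hZ z' hz' z hz hne hz'z
      subst hzz
      have h1 : Hig (p ++ s) (u ++ s) := hzps ▸ hle'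
      have hul : u.length = p.length := by
        have h2 := hig_length huh
        have h3 := hig_length h1
        simp only [List.length_append] at h3
        omega
      have h4 : List.Forall₂ (· ≤ ·) (p ++ s) (u ++ s) := by
        apply hig_forall₂ h1; simp [hul]
      have h5 : List.Forall₂ (· ≤ ·) p u := by
        have := List.forall₂_take_append (p ++ s) u s h4
        rwa [hul, List.take_left] at this
      have h6 : List.Forall₂ (· ≤ ·) u p := hig_forall₂ huh (le_of_eq hul.symm)
      exact forall₂_antisymm h6 h5
    · refine ⟨hs, fun v hv hvh => ?_⟩
      obtain ⟨z', hz', hle'⟩ := mem_conc hp hv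
      have hz'z : Hig z' z := hig_trans hle' (hzps ▸ hig_append (hig_refl p) hvh)
      have hzz : z' = z := by
        by_contra hne; exact hZ z' hz' z hz hne hz'z
      subst hzz
      have h1 : Hig (p ++ s) (p ++ v) := hzps ▸ hle'
      have hvl : v.length = s.length := by
        have h2 := hig_length hvh
        have h3 := hig_length h1
        simp only [List.length_append] at h3
        omega
      have h4 : List.Forall₂ (· ≤ ·) (p ++ s) (p ++ v) := by
        apply hig_forall₂ h1; simp [hvl]
      have h5 : List.Forall₂ (· ≤ ·) s v := by
        have := List.forall₂_drop_append (p ++ s) p v h4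
        rwa [List.drop_left] at this
      have h6 : List.Forall₂ (· ≤ ·) v s := hig_forall₂ hvh (le_of_eq hvl.symm)
      exact forall₂_antisymm h6 h5
  -- a seed factorization
  obtain ⟨z0, hz0⟩ := hZne
  obtain ⟨a0, ha0, b0, hb0, _⟩ := conc_mem (self_mem hz0)
  -- key lemma for X
  have keyX : ∀ n : ℕ, ∀ b ∈ Y, b.length < n → ∀ x ∈ X, ∃ z ∈ Z, ∃ p s : List A,
      z = p ++ s ∧ p ∈ X ∧ s ∈ Y ∧ Hig p x := by
    intro n
    induction n with
    | zero => intro b _ hb; omega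
    | succ n ih =>
      intro b hbY hbl x hx
      obtain ⟨z, hzZ, hzle⟩ := mem_conc hx hbY
      obtain ⟨p1, s1, hz_eq, hp1, hs1⟩ := hig_split hzle
      obtain ⟨a1, ha1, b1, hb1, hzab⟩ := conc_mem (self_mem hzZ)
      by_cases hle : a1.length ≤ p1.length
      · have hpre : a1 <+: p1 :=
          List.prefix_of_prefix_length_le (⟨b1, hzab.trans hz_eq⟩ : a1 <+: (p1 ++ s1))
            (⟨s1, rfl⟩ : p1 <+: (p1 ++ s1)) hle
        exact ⟨z, hzZ, a1, b1, hzab.symm, ha1, hb1,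
          hig_trans (hig_of_sublist hpre.sublist) hp1⟩
      · have hlen : p1.length + s1.length = a1.length + b1.length := by
          have := congrArg List.length (hzab.trans hz_eq)
          simpa using this.symm
        have hb1s1 : b1.length < s1.length := by omega
        have : b1.length < n := by
          have := hig_length hs1
          omega
        exact ih b1 hb1 this x hx
  -- key lemma for Y
  have keyY : ∀ n : ℕ, ∀ a ∈ X, a.length < n → ∀ y ∈ Y, ∃ z ∈ Z, ∃ p s : List A,
      z = p ++ s ∧ p ∈ X ∧ s ∈ Y ∧ Hig s y := by
    intro n
    induction n with
    | zero => intro a _ ha; omega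
    | succ n ih =>
      intro a haX hal y hy
      obtain ⟨z, hzZ, hzle⟩ := mem_conc haX hy
      obtain ⟨p1, s1, hz_eq, hp1, hs1⟩ := hig_split hzle
      obtain ⟨a1, ha1, b1, hb1, hzab⟩ := conc_mem (self_mem hzZ)
      by_cases hle : b1.length ≤ s1.length
      · have hsuf : b1 <:+ s1 :=
          List.suffix_of_suffix_length_le (⟨a1, hzab.trans hz_eq⟩ : b1 <:+ (p1 ++ s1))
            (⟨p1, rfl⟩ : s1 <:+ (p1 ++ s1)) hle
        exact ⟨z, hzZ, a1, b1, hzab.symm, ha1, hb1,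
          hig_trans (hig_of_sublist hsuf.sublist) hs1⟩
      · have hlen : p1.length + s1.length = a1.length + b1.length := by
          have := congrArg List.length (hzab.trans hz_eq)
          simpa using this.symm
        have ha1p1 : a1.length < p1.length := by omega
        have : a1.length < n := by
          have := hig_length hp1
          omega
        exact ih a1 ha1 this y hy
  constructor
  · apply Set.Subset.antisymm
    · intro x hx
      obtain ⟨z, hzZ, p, s, hzps, hp, hs, hpx⟩ :=
        keyX (b0.length + 1) b0 hb0 (Nat.lt_succ_self _) x hx
      exact ⟨p, (minmin z hzZ p s hzps hp hs).1, hpx⟩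
    · rintro x ⟨p, hp, hpx⟩
      exact hX hpx hp.1
  · apply Set.Subset.antisymm
    · intro y hy
      obtain ⟨z, hzZ, p, s, hzps, hp, hs, hsy⟩ :=
        keyY (a0.length + 1) a0 ha0 (Nat.lt_succ_self _) y hy
      exact ⟨s, (minmin z hzZ p s hzps hp hs).2, hsy⟩
    · rintro y ⟨s, hs, hsy⟩
      exact hY hsy hs.1
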